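/- No square-complementary graph has a cut vertex. -/

import Mathlib

/-!
Let `F = (G²)ᶜ` be the far graph of `G`, joining vertices at distance at least three; `G` is
square-complementary exactly when `F ≅ G`. Then `F` has no isolated vertex, and since `F` is again
isomorphic to its own far graph, neither has the far graph of `F`: every vertex has a vertex at
`F`-distance at least three. A cut vertex `v` splits the other vertices into sides `A` and `B` with
no edges between them, so `a ∈ A` and `b ∈ B` are far apart unless both are neighbours of `v`.
Starting from a vertex far from `v`, say in `A`, one finds a vertex of `B` (off `N(v)` if possible)
within `F`-distance two of every vertex, which is the contradiction.
-/

open SimpleGraph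

/-- The square of a graph: two distinct vertices are adjacent iff they are at
distance at most 2 in `G`, i.e. adjacent or having a common neighbor. -/
def SimpleGraph.square {V : Type*} (G : SimpleGraph V) : SimpleGraph V where
  Adj u v := u ≠ v ∧ (G.Adj u v ∨ ∃ w, G.Adj u w ∧ G.Adj w v)
  symm := by
    refine ⟨?_⟩
    rintro u v ⟨h, h' | ⟨w, hw1, hw2⟩⟩
    · exact ⟨h.symm, Or.inl h'.symm⟩
    · exact ⟨h.symm, Or.inr ⟨w, hw2.symm, hw1.symm⟩⟩
  loopless := ⟨by rintro v ⟨h, -⟩; exact h rfl⟩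

/-- A graph is square-complementary (squco) if its square is isomorphic to its
complement. -/
def SimpleGraph.IsSquco {V : Type*} (G : SimpleGraph V) : Prop :=
  Nonempty (G.square ≃g Gᶜ)

/-- `v` is a cut vertex of `G`: removing `v` disconnects two vertices that were
connected in `G`, i.e. removal increases the number of connected components. -/
def SimpleGraph.IsCutVertex {V : Type*} (G : SimpleGraph V) (v : V) : Prop :=
  ∃ u w : {x : V // x ≠ v}, G.Reachable u.1 w.1 ∧
    ¬ (G.induce {x : V | x ≠ v}).Reachable ⟨u.1, u.2⟩ ⟨w.1, w.2⟩

namespace SimpleGraph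

variable {V W : Type*} {G : SimpleGraph V} {H : SimpleGraph W}

def farGraph (G : SimpleGraph V) : SimpleGraph V := G.squareᶜ

theorem farGraph_adj {x y : V} :
    G.farGraph.Adj x y ↔ x ≠ y ∧ ¬ G.Adj x y ∧ ∀ z, G.Adj x z → ¬ G.Adj z y := by
  simp only [farGraph, compl_adj, square, not_and, not_or, not_exists]
  tauto

theorem Adj.not_farGraph_adj {x y : V} (h : G.Adj x y) : ¬ G.farGraph.Adj x y :=
  fun hf => (farGraph_adj.1 hf).2.1 h

theorem not_farGraph_adj_of_adj_of_adj {x y z : V} (hxz : G.Adj x z) (hzy : G.Adj z y) :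
    ¬ G.farGraph.Adj x y :=
  fun hf => (farGraph_adj.1 hf).2.2 z hxz hzy

theorem IsIsolated.isUniversal_farGraph {x : V} (h : G.IsIsolated x) :
    G.farGraph.IsUniversal x :=
  fun _ hxy => farGraph_adj.2 ⟨hxy, h _, fun z hxz => (h z hxz).elim⟩

theorem IsUniversal.farGraph_eq_bot {c : V} (h : G.IsUniversal c) : G.farGraph = ⊥ := by
  refine eq_bot_iff_forall_not_adj.2 fun x y hxy => ?_
  obtain ⟨hne, hnadj, hnz⟩ := farGraph_adj.1 hxy
  rcases eq_or_ne c x with rfl | hcx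
  · exact hnadj (h hne)
  rcases eq_or_ne c y with rfl | hcy
  · exact hnadj (h hcx).symm
  exact hnz c (h hcx).symm (h hcy)

namespace Iso

variable (e : G ≃g H)

def compl : Gᶜ ≃g Hᶜ where
  toEquiv := e.toEquiv
  map_rel_iff' := by simp [compl_adj, e.map_adj_iff]

def square : G.square ≃g H.square where
  toEquiv := e.toEquiv
  map_rel_iff' := by simp [SimpleGraph.square, e.surjective.exists, e.map_adj_iff]

def farGraph : G.farGraph ≃g H.farGraph := e.square.compl

theorem isIsolated_iff {x : V} : H.IsIsolated (e x) ↔ G.IsIsolated x := by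
  simp [IsIsolated, e.surjective.forall, e.map_adj_iff]

theorem isUniversal_iff {x : V} : H.IsUniversal (e x) ↔ G.IsUniversal x := by
  simp [IsUniversal, e.surjective.forall, e.map_adj_iff]

end Iso

theorem IsSquco.nonempty_farGraph_iso (h : G.IsSquco) : Nonempty (G.farGraph ≃g G) := by
  obtain ⟨φ⟩ := h
  simpa only [farGraph, compl_compl] using Nonempty.intro φ.compl

/-- An isolated vertex of `F ≅ G` would give an isolated vertex of `G`, which is universal in `F`,
hence in `G`; but then `F` has no edges at all, and neither has `G`. -/
theorem not_isIsolated_farGraph [Nontrivial V] (e : G.farGraph ≃g G) (x : V) :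
    ¬ G.farGraph.IsIsolated x := by
  intro hx
  have hc : G.IsUniversal (e (e x)) :=
    e.isUniversal_iff.2 ((e.isIsolated_iff.2 hx).isUniversal_farGraph)
  have hbot := (eq_bot_iff_isIsolated _).1 hc.farGraph_eq_bot
  exact hc.not_isIsolated _ (e.isIsolated_iff.2 (hbot (e x)))

structure IsSeparation (G : SimpleGraph V) (v : V) (A B : Set V) : Prop where
  nonempty_left : A.Nonempty
  nonempty_right : B.Nonempty
  disjoint : Disjoint A B
  compl_subset : {v}ᶜ ⊆ A ∪ B
  not_adj : ∀ a ∈ A, ∀ b ∈ B, ¬ G.Adj a b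

theorem IsCutVertex.exists_isSeparation {v : V} (hv : G.IsCutVertex v) :
    ∃ A B, G.IsSeparation v A B := by
  obtain ⟨u, w, -, huw⟩ := hv
  set S := {x | (G.induce {x | x ≠ v}).Reachable ⟨u.1, u.2⟩ x}
  refine ⟨Subtype.val '' S, Subtype.val '' Sᶜ,
    ⟨⟨u, u, .refl _, rfl⟩, ⟨w, w, huw, rfl⟩,
      (Set.disjoint_image_iff Subtype.val_injective).2 disjoint_compl_right, ?_, ?_⟩⟩
  · rw [← Set.image_union, Set.union_compl_self, Set.image_univ, Subtype.range_coe]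
    exact fun _ => id
  · rintro _ ⟨a, ha, rfl⟩ _ ⟨b, hb, rfl⟩ hab
    exact hb <| ha.trans (show (G.induce {x | x ≠ v}).Adj a b from hab).reachable

namespace IsSeparation

variable {v : V} {A B : Set V} (hs : G.IsSeparation v A B)
include hs

theorem symm : G.IsSeparation v B A :=
  ⟨hs.nonempty_right, hs.nonempty_left, hs.disjoint.symm, Set.union_comm A B ▸ hs.compl_subset,
    fun b hb a ha hba => hs.not_adj a ha b hb hba.symm⟩

theorem nontrivial : Nontrivial V := by
  obtain ⟨a, ha⟩ := hs.nonempty_left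
  obtain ⟨b, hb⟩ := hs.nonempty_right
  exact ⟨a, b, hs.disjoint.ne_of_mem ha hb⟩

theorem farGraph_adj_of_mem {a b : V} (ha : a ∈ A) (hb : b ∈ B)
    (hv : ¬ (G.Adj v a ∧ G.Adj v b)) : G.farGraph.Adj a b := by
  refine farGraph_adj.2 ⟨hs.disjoint.ne_of_mem ha hb, hs.not_adj a ha b hb,
    fun z haz hzb => ?_⟩
  rcases eq_or_ne z v with rfl | hzv
  · exact hv ⟨haz.symm, hzb⟩
  rcases hs.compl_subset hzv with hzA | hzB
  · exact hs.not_adj z hzA b hb hzb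
  · exact hs.not_adj a ha z hzB haz

theorem exists_isIsolated_farGraph_farGraph_of_mem_left
    (hfar : ∀ x, ¬ G.farGraph.IsIsolated x) {y₀ : V} (hy₀A : y₀ ∈ A)
    (hvy₀ : G.farGraph.Adj v y₀) : ∃ x, G.farGraph.farGraph.IsIsolated x := by
  have hy₀B : ∀ b ∈ B, G.farGraph.Adj b y₀ := fun b hb =>
    (hs.farGraph_adj_of_mem hy₀A hb fun h => (farGraph_adj.1 hvy₀).2.1 h.1).symm
  obtain ⟨x, hxB, hx⟩ : ∃ x ∈ B, G.Adj v x → ∀ b ∈ B, G.Adj v b := by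
    by_cases h : ∀ b ∈ B, G.Adj v b
    · exact hs.nonempty_right.imp fun b hb => ⟨hb, fun _ => h⟩
    · push Not at h
      exact h.imp fun b hb => ⟨hb.1, fun hvb => (hb.2 hvb).elim⟩
  refine ⟨x, fun y hxy => ?_⟩
  rcases eq_or_ne y v with rfl | hyv
  · exact not_farGraph_adj_of_adj_of_adj (hy₀B x hxB) hvy₀.symm hxy
  rcases hs.compl_subset hyv with hyA | hyB
  · by_cases hv : G.Adj v x ∧ G.Adj v y
    · -- a vertex far from `y` lies in `A` and is not adjacent to `v`, hence is far from `x`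
      obtain ⟨y', hyy'⟩ := exists_adj_iff_not_isIsolated.2 (hfar y)
      have hvy' : ¬ G.Adj v y' := fun h => not_farGraph_adj_of_adj_of_adj hv.2.symm h hyy'
      have hy'v : y' ≠ v := by
        rintro rfl
        exact hv.2.symm.not_farGraph_adj hyy'
      have hy'A : y' ∈ A :=
        (hs.compl_subset hy'v).resolve_right fun hy'B => hvy' (hx hv.1 y' hy'B)
      exact not_farGraph_adj_of_adj_of_adj (hs.farGraph_adj_of_mem hy'A hxB fun h => hvy' h.1).symm
        hyy'.symm hxy
    · exact (hs.farGraph_adj_of_mem hyA hxB fun h => hv ⟨h.2, h.1⟩).symm.not_farGraph_adj hxy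
  · exact not_farGraph_adj_of_adj_of_adj (hy₀B x hxB) (hy₀B y hyB).symm hxy

theorem exists_isIsolated_farGraph_farGraph (hfar : ∀ x, ¬ G.farGraph.IsIsolated x) :
    ∃ x, G.farGraph.farGraph.IsIsolated x := by
  obtain ⟨y₀, hvy₀⟩ := exists_adj_iff_not_isIsolated.2 (hfar v)
  rcases hs.compl_subset (farGraph_adj.1 hvy₀).1.symm with hy₀A | hy₀B
  · exact hs.exists_isIsolated_farGraph_farGraph_of_mem_left hfar hy₀A hvy₀
  · exact hs.symm.exists_isIsolated_farGraph_farGraph_of_mem_left hfar hy₀B hvy₀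

end IsSeparation

end SimpleGraph

theorem isSquco_no_cutVertex_general {V : Type*} (G : SimpleGraph V)
    (h : G.IsSquco) (v : V) : ¬ G.IsCutVertex v := by
  intro hv
  obtain ⟨A, B, hs⟩ := hv.exists_isSeparation
  have := hs.nontrivial
  obtain ⟨e⟩ := h.nonempty_farGraph_iso
  obtain ⟨x, hx⟩ := hs.exists_isIsolated_farGraph_farGraph (not_isIsolated_farGraph e)
  exact not_isIsolated_farGraph e.farGraph x hx

/-- No square-complementary graph has a cut vertex. -/
theorem isSquco_no_cutVertex {V : Type*} [Fintype V] (G : SimpleGraph V)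
    (h : G.IsSquco) (v : V) : ¬ G.IsCutVertex v :=
  isSquco_no_cutVertex_general G h v
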